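/- arXiv:1812.10699 — 9 statements merged into one kernel-verified Lean document; each statement's English description precedes it below -/
import Mathlib

section
/- Let H, H₁, H₂ be Hilbert spaces, T₁ : D(T₁) ⊆ H₁ → H a closed densely defined operator, T₂ : D(T₂) ⊆ H → H₂ densely defined with D(T₁*) = D(T₂), and suppose ‖T₁* f‖₁ ≤ λ‖T₂ f‖₂ for all f ∈ D(T₁*) and some λ > 0. Then there exists a bounded operator U : H₁ → H₂ such that T₁ = T₂* U (i.e., for all x ∈ D(T₁), Ux ∈ D(T₂*) and T₂*(Ux) = T₁x). -/
/-!
The estimate `‖T₁† f‖ ≤ λ ‖T₂ f‖` says that `T₂ f ↦ T₁† f` is a well-defined bounded map on the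
range of `T₂`. It extends by continuity to the closure of that range and then, composing with the
orthogonal projection onto the closure, to a bounded `C : H₂ → H₁` with `C T₂ = T₁†` on `D(T₂)`.
For `x ∈ D(T₁)` and `f ∈ D(T₂)` this gives `⟪C† x, T₂ f⟫ = ⟪x, T₁† f⟫ = ⟪T₁ x, f⟫`, so `U = C†`
maps `x` into `D(T₂†)` with `T₂† (U x) = T₁ x`.
-/

open scoped InnerProductSpace

section

variable {𝕜 E F G : Type*} [RCLike 𝕜] [AddCommGroup E] [Module 𝕜 E]
  [NormedAddCommGroup F] [NormedSpace 𝕜 F] [CompleteSpace F]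
  [NormedAddCommGroup G] [InnerProductSpace 𝕜 G] [CompleteSpace G]

theorem LinearMap.exists_continuousLinearMap_comp_eq_of_norm_le (A : E →ₗ[𝕜] F)
    (B : E →ₗ[𝕜] G) (c : ℝ) (hAB : ∀ x, ‖A x‖ ≤ c * ‖B x‖) :
    ∃ C : G →L[𝕜] F, ∀ x, C (B x) = A x := by
  set K := (LinearMap.range B).topologicalClosure
  let B' : E →ₗ[𝕜] K := B.codRestrict K fun x ↦
    (LinearMap.range B).le_topologicalClosure (LinearMap.mem_range_self B x)
  have hdense : DenseRange B' := by
    rw [DenseRange, Subtype.dense_iff, ← Set.range_comp]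
    exact (LinearMap.range B).topologicalClosure_coe.le
  refine ⟨(A.extendOfNorm B').comp K.orthogonalProjectionOnto, fun x ↦ ?_⟩
  have hproj : K.orthogonalProjectionOnto (B x) = B' x :=
    K.orthogonalProjectionOnto_mem_subspace_eq_self (B' x)
  rw [ContinuousLinearMap.comp_apply, hproj, LinearMap.extendOfNorm_eq hdense ⟨c, hAB⟩]

namespace LinearPMap

variable {H H₁ H₂ : Type*}
  [NormedAddCommGroup H] [InnerProductSpace 𝕜 H] [CompleteSpace H]
  [NormedAddCommGroup H₁] [InnerProductSpace 𝕜 H₁] [CompleteSpace H₁]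
  [NormedAddCommGroup H₂] [InnerProductSpace 𝕜 H₂] [CompleteSpace H₂]

theorem adjoint_apply_adjoint_eq_of_comp_eq_adjoint {T₁ : H₁ →ₗ.[𝕜] H} {T₂ : H →ₗ.[𝕜] H₂}
    (hT₁ : Dense (T₁.domain : Set H₁)) (hT₂ : Dense (T₂.domain : Set H))
    (hdom : T₂.domain ≤ T₁†.domain) (C : H₂ →L[𝕜] H₁)
    (hC : ∀ f : T₂.domain, C (T₂ f) = T₁† (Submodule.inclusion hdom f)) (x : T₁.domain) :
    ∃ hx : C.adjoint x ∈ T₂†.domain, T₂† ⟨C.adjoint x, hx⟩ = T₁ x := by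
  have hinner : ∀ f : T₂.domain, ⟪T₁ x, (f : H)⟫_𝕜 = ⟪C.adjoint x, T₂ f⟫_𝕜 := fun f ↦ by
    rw [C.adjoint_inner_left, hC, ← inner_conj_symm (x : H₁), adjoint_isFormalAdjoint hT₁,
      inner_conj_symm]
    rfl
  exact ⟨mem_adjoint_domain_of_exists _ ⟨T₁ x, hinner⟩, adjoint_apply_eq hT₂ _ hinner⟩

end LinearPMap

end

theorem stmt_5_general {H H₁ H₂ : Type*}
    [NormedAddCommGroup H] [InnerProductSpace ℂ H] [CompleteSpace H]
    [NormedAddCommGroup H₁] [InnerProductSpace ℂ H₁] [CompleteSpace H₁]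
    [NormedAddCommGroup H₂] [InnerProductSpace ℂ H₂] [CompleteSpace H₂]
    (T₁ : H₁ →ₗ.[ℂ] H) (hT₁d : Dense (T₁.domain : Set H₁))
    (T₂ : H →ₗ.[ℂ] H₂) (hT₂d : Dense (T₂.domain : Set H))
    (hdom : T₁.adjoint.domain = T₂.domain)
    (lam : ℝ)
    (hle : ∀ (f : H) (h1 : f ∈ T₁.adjoint.domain) (h2 : f ∈ T₂.domain),
      ‖T₁.adjoint ⟨f, h1⟩‖ ≤ lam * ‖T₂ ⟨f, h2⟩‖) :
    ∃ U : H₁ →L[ℂ] H₂, ∀ x : T₁.domain,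
      ∃ hm : U (x : H₁) ∈ T₂.adjoint.domain, T₂.adjoint ⟨U (x : H₁), hm⟩ = T₁ x := by
  let A : T₂.domain →ₗ[ℂ] H₁ := T₁.adjoint.toFun ∘ₗ Submodule.inclusion hdom.ge
  obtain ⟨C, hC⟩ := A.exists_continuousLinearMap_comp_eq_of_norm_le T₂.toFun lam
    fun f ↦ hle f (hdom.ge f.2) f.2
  exact ⟨C.adjoint,
    LinearPMap.adjoint_apply_adjoint_eq_of_comp_eq_adjoint hT₁d hT₂d hdom.ge C hC⟩

/-- Let `H, H₁, H₂` be Hilbert spaces, `T₁ : D(T₁) ⊆ H₁ → H` a closed densely defined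
operator, `T₂ : D(T₂) ⊆ H → H₂` densely defined with `D(T₁*) = D(T₂)`, and suppose
`‖T₁* f‖₁ ≤ λ‖T₂ f‖₂` for all `f ∈ D(T₁*)` and some `λ > 0`. Then there exists a bounded
operator `U : H₁ → H₂` such that `T₁ = T₂* U`. -/
theorem stmt_5 {H H₁ H₂ : Type*}
    [NormedAddCommGroup H] [InnerProductSpace ℂ H] [CompleteSpace H]
    [NormedAddCommGroup H₁] [InnerProductSpace ℂ H₁] [CompleteSpace H₁]
    [NormedAddCommGroup H₂] [InnerProductSpace ℂ H₂] [CompleteSpace H₂]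
    (T₁ : H₁ →ₗ.[ℂ] H) (hT₁c : T₁.IsClosed) (hT₁d : Dense (T₁.domain : Set H₁))
    (T₂ : H →ₗ.[ℂ] H₂) (hT₂d : Dense (T₂.domain : Set H))
    (hdom : T₁.adjoint.domain = T₂.domain)
    (lam : ℝ) (hlam : 0 < lam)
    (hle : ∀ (f : H) (h1 : f ∈ T₁.adjoint.domain) (h2 : f ∈ T₂.domain),
      ‖T₁.adjoint ⟨f, h1⟩‖ ≤ lam * ‖T₂ ⟨f, h2⟩‖) :
    ∃ U : H₁ →L[ℂ] H₂, ∀ x : T₁.domain,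
      ∃ hm : U (x : H₁) ∈ T₂.adjoint.domain, T₂.adjoint ⟨U (x : H₁), hm⟩ = T₁ x :=
  stmt_5_general T₁ hT₁d T₂ hT₂d hdom lam hle
end

section
/- If {gₙ} is a weak atomic system for a closable densely defined operator A, then {gₙ} is a weak A-frame: there exists α > 0 such that α‖A* f‖² ≤ ∑ₙ |⟨f, gₙ⟩|² < ∞ for all f ∈ D(A*). -/
open scoped ComplexInnerProductSpace

/-!
For `u ∈ D(A*)` and `h ∈ D(A)`, the atomic expansion of `Ah` and the Cauchy–Schwarz inequality
in `ℓ²` give `|⟨A* u, h⟩| = |⟨u, Ah⟩| ≤ γ ‖h‖ (∑ₙ |⟨u, gₙ⟩|²)^{1/2}`. Since `D(A)` is dense,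
this bounds `‖A* u‖` by `γ (∑ₙ |⟨u, gₙ⟩|²)^{1/2}`, so `α = γ⁻²` works.
-/

theorem norm_tsum_mul_le_sqrt_mul_sqrt {ι R : Type*} [SeminormedRing R] {a b : ι → R}
    (ha : Summable fun i => ‖a i‖ ^ 2) (hb : Summable fun i => ‖b i‖ ^ 2) :
    ‖∑' i, a i * b i‖ ≤ √(∑' i, ‖a i‖ ^ 2) * √(∑' i, ‖b i‖ ^ 2) := by
  have rpow_two_eq : ∀ f : ι → R, (fun i => ‖f i‖ ^ (2 : ℝ)) = fun i => ‖f i‖ ^ 2 := fun f =>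
    funext fun i => Real.rpow_two _
  obtain ⟨hab, holder⟩ := Real.summable_and_inner_le_Lp_mul_Lq_tsum_of_nonneg
    Real.HolderConjugate.two_two (fun i => norm_nonneg (a i)) (fun i => norm_nonneg (b i))
    (rpow_two_eq a ▸ ha) (rpow_two_eq b ▸ hb)
  rw [rpow_two_eq a, rpow_two_eq b, ← Real.sqrt_eq_rpow, ← Real.sqrt_eq_rpow] at holder
  have hab' : Summable fun i => ‖a i * b i‖ :=
    hab.of_nonneg_of_le (fun _ => norm_nonneg _) fun i => norm_mul_le _ _
  calc ‖∑' i, a i * b i‖ ≤ ∑' i, ‖a i * b i‖ := norm_tsum_le_tsum_norm hab'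
    _ ≤ ∑' i, ‖a i‖ * ‖b i‖ := hab'.tsum_le_tsum (fun i => norm_mul_le _ _) hab
    _ ≤ _ := holder

theorem norm_le_of_forall_mem_dense_norm_inner_le {𝕜 E : Type*} [RCLike 𝕜]
    [SeminormedAddCommGroup E] [InnerProductSpace 𝕜 E] {s : Set E} (hs : Dense s) {v : E}
    {C : ℝ} (hC : 0 ≤ C) (h : ∀ w ∈ s, ‖inner 𝕜 v w‖ ≤ C * ‖w‖) : ‖v‖ ≤ C := by
  rw [← innerSL_apply_norm 𝕜 v]
  refine (innerSL 𝕜 v).opNorm_le_bound hC fun w => ?_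
  refine hs.induction (P := fun w => ‖innerSL 𝕜 v w‖ ≤ C * ‖w‖) (fun w hw => h w hw) ?_ w
  exact isClosed_le (by fun_prop) (by fun_prop)

section Adjoint

variable {𝕜 E F ι : Type*} [RCLike 𝕜] [NormedAddCommGroup E] [InnerProductSpace 𝕜 E]
  [CompleteSpace E] [NormedAddCommGroup F] [InnerProductSpace 𝕜 F]

open LinearPMap

theorem LinearPMap.norm_adjoint_apply_le_of_atomic {A : E →ₗ.[𝕜] F}
    (hA : Dense (A.domain : Set E)) {g : ι → F} {γ : ℝ} (hγ : 0 ≤ γ) (u : A†.domain)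
    (hu : Summable fun n => ‖inner 𝕜 (u : F) (g n)‖ ^ 2)
    (hatom : ∀ h : A.domain, ∃ a : ι → 𝕜, Summable (fun n => ‖a n‖ ^ 2) ∧
      √(∑' n, ‖a n‖ ^ 2) ≤ γ * ‖(h : E)‖ ∧
      inner 𝕜 (u : F) (A h) = ∑' n, a n * inner 𝕜 (u : F) (g n)) :
    ‖A† u‖ ≤ γ * √(∑' n, ‖inner 𝕜 (u : F) (g n)‖ ^ 2) := by
  set S := ∑' n, ‖inner 𝕜 (u : F) (g n)‖ ^ 2
  refine norm_le_of_forall_mem_dense_norm_inner_le (𝕜 := 𝕜) hA (by positivity) fun w hw => ?_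
  obtain ⟨a, ha, ha_le, hexp⟩ := hatom ⟨w, hw⟩
  calc ‖inner 𝕜 (A† u) w‖ = ‖∑' n, a n * inner 𝕜 (u : F) (g n)‖ := by
        rw [← hexp, adjoint_isFormalAdjoint hA u ⟨w, hw⟩]
    _ ≤ √(∑' n, ‖a n‖ ^ 2) * √S := norm_tsum_mul_le_sqrt_mul_sqrt ha hu
    _ ≤ γ * ‖w‖ * √S := by gcongr
    _ = γ * √S * ‖w‖ := mul_right_comm _ _ _

end Adjoint

theorem stmt_6_general {H : Type*} [NormedAddCommGroup H] [InnerProductSpace ℂ H] [CompleteSpace H]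
    (A : H →ₗ.[ℂ] H) (hA : Dense (A.domain : Set H)) (g : ℕ → H)
    (hg : ∀ u : A.adjoint.domain, Summable fun n => ‖⟪(u : H), g n⟫‖ ^ 2)
    (hatom : ∃ γ : ℝ, 0 < γ ∧ ∀ h : A.domain, ∃ a : ℕ → ℂ,
      Summable (fun n => ‖a n‖ ^ 2) ∧
      Real.sqrt (∑' n, ‖a n‖ ^ 2) ≤ γ * ‖(h : H)‖ ∧
      ∀ u : A.adjoint.domain, ⟪(u : H), A h⟫ = ∑' n, a n * ⟪(u : H), g n⟫) :
    ∃ α : ℝ, 0 < α ∧ ∀ u : A.adjoint.domain,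
      (Summable fun n => ‖⟪(u : H), g n⟫‖ ^ 2) ∧
      α * ‖A.adjoint u‖ ^ 2 ≤ ∑' n, ‖⟪(u : H), g n⟫‖ ^ 2 := by
  obtain ⟨γ, hγ, hat⟩ := hatom
  refine ⟨γ⁻¹ ^ 2, by positivity, fun u => ⟨hg u, ?_⟩⟩
  have hbound := A.norm_adjoint_apply_le_of_atomic hA hγ.le u (hg u) fun h =>
    (hat h).imp fun _ ⟨ha, ha_le, hexp⟩ => ⟨ha, ha_le, hexp u⟩
  have hS : 0 ≤ ∑' n, ‖⟪(u : H), g n⟫‖ ^ 2 := tsum_nonneg fun _ => by positivity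
  calc γ⁻¹ ^ 2 * ‖A.adjoint u‖ ^ 2 ≤ γ⁻¹ ^ 2 * (γ * √(∑' n, ‖⟪(u : H), g n⟫‖ ^ 2)) ^ 2 := by
        gcongr
    _ = ∑' n, ‖⟪(u : H), g n⟫‖ ^ 2 := by
        rw [mul_pow, Real.sq_sqrt hS, ← mul_assoc, ← mul_pow, inv_mul_cancel₀ hγ.ne', one_pow,
          one_mul]

/-- If `{gₙ}` is a weak atomic system for a closable densely defined operator `A`, then
`{gₙ}` is a weak `A`-frame: there exists `α > 0` such that
`α‖A* f‖² ≤ ∑ₙ |⟨f, gₙ⟩|² < ∞` for all `f ∈ D(A*)`. -/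
theorem stmt_6 {H : Type*} [NormedAddCommGroup H] [InnerProductSpace ℂ H] [CompleteSpace H]
    (A : H →ₗ.[ℂ] H) (hA : Dense (A.domain : Set H)) (hAc : A.IsClosable) (g : ℕ → H)
    (hg : ∀ u : A.adjoint.domain, Summable fun n => ‖⟪(u : H), g n⟫‖ ^ 2)
    (hatom : ∃ γ : ℝ, 0 < γ ∧ ∀ h : A.domain, ∃ a : ℕ → ℂ,
      Summable (fun n => ‖a n‖ ^ 2) ∧
      Real.sqrt (∑' n, ‖a n‖ ^ 2) ≤ γ * ‖(h : H)‖ ∧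
      ∀ u : A.adjoint.domain, ⟪(u : H), A h⟫ = ∑' n, a n * ⟪(u : H), g n⟫) :
    ∃ α : ℝ, 0 < α ∧ ∀ u : A.adjoint.domain,
      (Summable fun n => ‖⟪(u : H), g n⟫‖ ^ 2) ∧
      α * ‖A.adjoint u‖ ^ 2 ≤ ∑' n, ‖⟪(u : H), g n⟫‖ ^ 2 :=
  stmt_6_general A hA g hg hatom
end

section
/- Let A be a closable densely defined operator and {gₙ} a weak A-frame. Then there exists a Bessel sequence {tₙ} in H that is a weak A-dual of {gₙ}, i.e. ⟨Ah, u⟩ = ∑ₙ ⟨h, tₙ⟩⟨gₙ, u⟩ for all h ∈ D(A) and u ∈ D(A*). -/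
/-!
For the analysis operator `T u = (⟪g n, u⟫)ₙ ∈ ℓ²`, the weak frame inequality reads
`‖A* u‖ ≤ α^(-1/2) ‖T u‖`, so `A* = Q ∘ T` for a bounded `Q : ℓ² → H`. The sequence
`tₙ = Q eₙ` is then Bessel, since `∑ₙ |⟪f, tₙ⟫|² = ‖Q* f‖²`, and expanding
`⟪A* u, h⟫ = ⟪T u, Q* h⟫` in the standard basis of `ℓ²` is exactly the weak duality.
-/

open scoped ComplexInnerProductSpace InnerProductSpace InnerProduct ComplexConjugate lp

section Factorization

variable {𝕜 V E F : Type*} [RCLike 𝕜] [AddCommGroup V] [Module 𝕜 V]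
  [NormedAddCommGroup E] [InnerProductSpace 𝕜 E] [CompleteSpace E]
  [NormedAddCommGroup F] [NormedSpace 𝕜 F] [CompleteSpace F]

theorem LinearMap.exists_clm_comp_eq_of_norm_le (T : V →ₗ[𝕜] E) (L : V →ₗ[𝕜] F) (C : ℝ)
    (hL : ∀ v, ‖L v‖ ≤ C * ‖T v‖) : ∃ Q : E →L[𝕜] F, ∀ v, Q (T v) = L v := by
  set K := (LinearMap.range T).topologicalClosure
  let e : V →ₗ[𝕜] K := T.codRestrict K fun v =>
    Submodule.le_topologicalClosure _ (LinearMap.mem_range_self T v)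
  have he : DenseRange e := by
    rw [DenseRange, Subtype.dense_iff, ← Set.range_comp]
    exact (Submodule.topologicalClosure_coe _).le
  refine ⟨(L.extendOfNorm e).comp K.orthogonalProjectionOnto, fun v => ?_⟩
  have hproj : K.orthogonalProjectionOnto (T v) = e v :=
    K.orthogonalProjectionOnto_mem_subspace_eq_self (e v)
  rw [ContinuousLinearMap.comp_apply, hproj]
  exact LinearMap.extendOfNorm_eq he ⟨C, hL⟩ v

end Factorization

def IsBesselSeq (𝕜 : Type*) {ι H : Type*} [RCLike 𝕜] [NormedAddCommGroup H]
    [InnerProductSpace 𝕜 H] (t : ι → H) : Prop :=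
  ∃ γ : ℝ, 0 < γ ∧ ∀ f : H, (Summable fun i => ‖⟪f, t i⟫_𝕜‖ ^ 2) ∧
    ∑' i, ‖⟪f, t i⟫_𝕜‖ ^ 2 ≤ γ * ‖f‖ ^ 2

section SynthesisOperator

variable {𝕜 ι H : Type*} [RCLike 𝕜] [DecidableEq ι]
  [NormedAddCommGroup H] [InnerProductSpace 𝕜 H] [CompleteSpace H]
  (Q : ℓ²(ι, 𝕜) →L[𝕜] H)

theorem ContinuousLinearMap.inner_apply_single_one_left (i : ι) (h : H) :
    ⟪Q (lp.single 2 i 1), h⟫_𝕜 = ((Q†) h) i := by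
  rw [← adjoint_inner_right, lp.inner_single_left, RCLike.inner_apply', map_one, one_mul]

theorem ContinuousLinearMap.hasSum_norm_inner_apply_single_one_sq (f : H) :
    HasSum (fun i => ‖⟪f, Q (lp.single 2 i 1)⟫_𝕜‖ ^ 2) (‖(Q†) f‖ ^ 2) := by
  have := lp.hasSum_norm (p := 2) (by simp) ((Q†) f)
  simp only [ENNReal.toReal_ofNat, Real.rpow_two] at this
  simpa only [← inner_conj_symm f, RCLike.norm_conj, inner_apply_single_one_left] using this

theorem ContinuousLinearMap.isBesselSeq_apply_single_one :
    IsBesselSeq 𝕜 fun i => Q (lp.single 2 i 1) := by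
  refine ⟨‖Q†‖ ^ 2 + 1, by positivity, fun f => ?_⟩
  have hsum := Q.hasSum_norm_inner_apply_single_one_sq f
  refine ⟨hsum.summable, ?_⟩
  rw [hsum.tsum_eq]
  calc ‖(Q†) f‖ ^ 2 ≤ (‖Q†‖ * ‖f‖) ^ 2 := by gcongr; exact (Q†).le_opNorm f
    _ ≤ (‖Q†‖ ^ 2 + 1) * ‖f‖ ^ 2 := by nlinarith [sq_nonneg ‖f‖]

theorem ContinuousLinearMap.inner_apply_eq_tsum (x : ℓ²(ι, 𝕜)) (h : H) :
    ⟪Q x, h⟫_𝕜 = ∑' i, conj (x i) * ⟪Q (lp.single 2 i 1), h⟫_𝕜 := by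
  rw [← ContinuousLinearMap.adjoint_inner_right, lp.inner_eq_tsum]
  simp only [Q.inner_apply_single_one_left, RCLike.inner_apply']

end SynthesisOperator

section AnalysisOperator

variable {𝕜 ι H : Type*} [RCLike 𝕜] [NormedAddCommGroup H] [InnerProductSpace 𝕜 H]
  (D : Submodule 𝕜 H) (g : ι → H) (hg : ∀ u : D, Summable fun i => ‖⟪(u : H), g i⟫_𝕜‖ ^ 2)

-- Pairing `g i` on the left makes the coefficients linear in `u`.
def analysisOperator : D →ₗ[𝕜] ℓ²(ι, 𝕜) where
  toFun u := ⟨fun i => ⟪g i, (u : H)⟫_𝕜, memℓp_gen <| by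
    simpa only [ENNReal.toReal_ofNat, Real.rpow_two, norm_inner_symm] using hg u⟩
  map_add' u v := lp.ext <| funext fun i => inner_add_right _ _ _
  map_smul' c u := lp.ext <| funext fun i => inner_smul_right _ _ _

theorem analysisOperator_apply (u : D) (i : ι) :
    analysisOperator D g hg u i = ⟪g i, (u : H)⟫_𝕜 :=
  rfl

theorem norm_analysisOperator_sq (u : D) :
    ‖analysisOperator D g hg u‖ ^ 2 = ∑' i, ‖⟪(u : H), g i⟫_𝕜‖ ^ 2 := by
  have := (lp.hasSum_norm (p := 2) (by simp) (analysisOperator D g hg u)).tsum_eq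
  simp only [ENNReal.toReal_ofNat, Real.rpow_two, analysisOperator_apply] at this
  simp only [← this, norm_inner_symm]

end AnalysisOperator

theorem stmt_7_general {H : Type*} [NormedAddCommGroup H] [InnerProductSpace ℂ H] [CompleteSpace H]
    (A : H →ₗ.[ℂ] H) (hA : Dense (A.domain : Set H)) (g : ℕ → H)
    (α : ℝ) (hα : 0 < α)
    (hframe : ∀ u : A.adjoint.domain, (Summable fun n => ‖⟪(u : H), g n⟫‖ ^ 2) ∧
      α * ‖A.adjoint u‖ ^ 2 ≤ ∑' n, ‖⟪(u : H), g n⟫‖ ^ 2) :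
    ∃ t : ℕ → H,
      (∃ γ : ℝ, 0 < γ ∧ ∀ f : H, (Summable fun n => ‖⟪f, t n⟫‖ ^ 2) ∧
        ∑' n, ‖⟪f, t n⟫‖ ^ 2 ≤ γ * ‖f‖ ^ 2) ∧
      ∀ (h : A.domain) (u : A.adjoint.domain),
        ⟪(u : H), A h⟫ = ∑' n, ⟪t n, (h : H)⟫ * ⟪(u : H), g n⟫ := by
  set T := analysisOperator A.adjoint.domain g fun u => (hframe u).1
  have hbound : ∀ u, ‖A.adjoint u‖ ≤ (√α)⁻¹ * ‖T u‖ := fun u => by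
    rw [← div_eq_inv_mul, le_div_iff₀' (by positivity), ← Real.sqrt_sq (norm_nonneg (T u)),
      ← Real.sqrt_sq (norm_nonneg (A.adjoint u)), ← Real.sqrt_mul hα.le]
    exact Real.sqrt_le_sqrt ((norm_analysisOperator_sq _ _ _ u).symm ▸ (hframe u).2)
  obtain ⟨Q, hQ⟩ := T.exists_clm_comp_eq_of_norm_le A.adjoint.toFun _ hbound
  refine ⟨fun n => Q (lp.single 2 n 1), Q.isBesselSeq_apply_single_one, fun h u => ?_⟩
  calc ⟪(u : H), A h⟫ = ⟪A.adjoint u, (h : H)⟫ :=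
        (LinearPMap.adjoint_isFormalAdjoint hA u h).symm
    _ = ⟪Q (T u), (h : H)⟫ := by rw [hQ]; rfl
    _ = ∑' n, conj (T u n) * ⟪Q (lp.single 2 n 1), (h : H)⟫ := Q.inner_apply_eq_tsum _ _
    _ = _ := tsum_congr fun n => by rw [mul_comm, analysisOperator_apply, inner_conj_symm]

/-- Let `A` be a closable densely defined operator and `{gₙ}` a weak `A`-frame. Then there
exists a Bessel sequence `{tₙ}` in `H` that is a weak `A`-dual of `{gₙ}`, i.e.
`⟨Ah, u⟩ = ∑ₙ ⟨h, tₙ⟩⟨gₙ, u⟩` for all `h ∈ D(A)` and `u ∈ D(A*)`.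
(The paper's `⟨x, y⟩`, linear in the first entry, is `⟪y, x⟫` in Mathlib.) -/
theorem stmt_7 {H : Type*} [NormedAddCommGroup H] [InnerProductSpace ℂ H] [CompleteSpace H]
    (A : H →ₗ.[ℂ] H) (hA : Dense (A.domain : Set H)) (hAc : A.IsClosable) (g : ℕ → H)
    (α : ℝ) (hα : 0 < α)
    (hframe : ∀ u : A.adjoint.domain, (Summable fun n => ‖⟪(u : H), g n⟫‖ ^ 2) ∧
      α * ‖A.adjoint u‖ ^ 2 ≤ ∑' n, ‖⟪(u : H), g n⟫‖ ^ 2) :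
    ∃ t : ℕ → H,
      (∃ γ : ℝ, 0 < γ ∧ ∀ f : H, (Summable fun n => ‖⟪f, t n⟫‖ ^ 2) ∧
        ∑' n, ‖⟪f, t n⟫‖ ^ 2 ≤ γ * ‖f‖ ^ 2) ∧
      ∀ (h : A.domain) (u : A.adjoint.domain),
        ⟪(u : H), A h⟫ = ∑' n, ⟪t n, (h : H)⟫ * ⟪(u : H), g n⟫ :=
  stmt_7_general A hA g α hα hframe
end

section
/- Let A be a densely defined operator, {gₙ} a weak A-frame, and {tₙ} a Bessel weak A-dual of {gₙ}. Then for every u ∈ D(A*) the series ∑ₙ ⟨u, gₙ⟩ tₙ converges in H and A* u = ∑ₙ ⟨u, gₙ⟩ tₙ. -/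
open scoped ComplexInnerProductSpace

/-- Key finite estimate from the Bessel property: `‖∑ n in s, c n • t n‖ ^ 2 ≤ γ * ∑ ‖c n‖ ^ 2`. -/
lemma bessel_finset_bound {H : Type*} [NormedAddCommGroup H] [InnerProductSpace ℂ H]
    (t : ℕ → H) (γ : ℝ) (hγ : 0 < γ)
    (hBessel : ∀ f : H, (Summable fun n => ‖⟪f, t n⟫‖ ^ 2) ∧
      ∑' n, ‖⟪f, t n⟫‖ ^ 2 ≤ γ * ‖f‖ ^ 2)
    (c : ℕ → ℂ) (s : Finset ℕ) :
    ‖∑ n ∈ s, c n • t n‖ ^ 2 ≤ γ * ∑ n ∈ s, ‖c n‖ ^ 2 := by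
  set v := ∑ n ∈ s, c n • t n with hv
  have hvv : (‖v‖ ^ 2 : ℝ) = ‖⟪v, v⟫‖ := by
    rw [@inner_self_eq_norm_sq_to_K ℂ, norm_pow]
    simp
  have hinner : ⟪v, v⟫ = ∑ n ∈ s, (starRingEnd ℂ) (c n) * ⟪t n, v⟫ := by
    rw [hv, sum_inner]
    exact Finset.sum_congr rfl fun n _ => inner_smul_left _ _ _
  have h1 : ‖⟪v, v⟫‖ ≤ ∑ n ∈ s, ‖c n‖ * ‖⟪v, t n⟫‖ := by
    rw [hinner]
    refine (norm_sum_le _ _).trans (le_of_eq (Finset.sum_congr rfl fun n _ => ?_))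
    rw [norm_mul, RCLike.norm_conj, ← norm_inner_symm]
  have hCS : (∑ n ∈ s, ‖c n‖ * ‖⟪v, t n⟫‖) ^ 2 ≤
      (∑ n ∈ s, ‖c n‖ ^ 2) * ∑ n ∈ s, ‖⟪v, t n⟫‖ ^ 2 :=
    Finset.sum_mul_sq_le_sq_mul_sq s _ _
  have hbes : ∑ n ∈ s, ‖⟪v, t n⟫‖ ^ 2 ≤ γ * ‖v‖ ^ 2 :=
    le_trans (Summable.sum_le_tsum s (fun n _ => by positivity) (hBessel v).1) (hBessel v).2
  -- combine: ‖v‖^4 ≤ (∑ ‖c‖²) * γ * ‖v‖²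
  rcases eq_or_ne v 0 with h0 | h0
  · rw [h0]
    have : (0 : ℝ) ≤ ∑ n ∈ s, ‖c n‖ ^ 2 := Finset.sum_nonneg fun n _ => by positivity
    simp only [norm_zero]
    rw [zero_pow (by norm_num)]
    exact mul_nonneg hγ.le this
  · have hvpos : 0 < ‖v‖ := norm_pos_iff.mpr h0
    have key : (‖v‖ ^ 2) ^ 2 ≤ (γ * ∑ n ∈ s, ‖c n‖ ^ 2) * ‖v‖ ^ 2 := by
      calc (‖v‖ ^ 2) ^ 2 = ‖⟪v, v⟫‖ ^ 2 := by rw [hvv]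
        _ ≤ (∑ n ∈ s, ‖c n‖ * ‖⟪v, t n⟫‖) ^ 2 := by
            apply pow_le_pow_left₀ (norm_nonneg _) h1
        _ ≤ (∑ n ∈ s, ‖c n‖ ^ 2) * ∑ n ∈ s, ‖⟪v, t n⟫‖ ^ 2 := hCS
        _ ≤ (∑ n ∈ s, ‖c n‖ ^ 2) * (γ * ‖v‖ ^ 2) := by
            apply mul_le_mul_of_nonneg_left hbes
            exact Finset.sum_nonneg fun n _ => by positivity
        _ = (γ * ∑ n ∈ s, ‖c n‖ ^ 2) * ‖v‖ ^ 2 := by ring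
    have key' : ‖v‖ ^ 2 * ‖v‖ ^ 2 ≤ (γ * ∑ n ∈ s, ‖c n‖ ^ 2) * ‖v‖ ^ 2 := by
      calc ‖v‖ ^ 2 * ‖v‖ ^ 2 = (‖v‖ ^ 2) ^ 2 := (sq _).symm
        _ ≤ _ := key
    exact le_of_mul_le_mul_right key' (by positivity)

/-- Let `A` be a densely defined operator, `{gₙ}` a weak `A`-frame, and `{tₙ}` a Bessel weak
`A`-dual of `{gₙ}`. Then for every `u ∈ D(A*)` the series `∑ₙ ⟨u, gₙ⟩ tₙ` converges in `H`
and `A* u = ∑ₙ ⟨u, gₙ⟩ tₙ`.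
(The paper's `⟨u, gₙ⟩`, linear in the first entry, is `⟪gₙ, u⟫` in Mathlib.) -/
theorem stmt_9 {H : Type*} [NormedAddCommGroup H] [InnerProductSpace ℂ H] [CompleteSpace H]
    (A : H →ₗ.[ℂ] H) (hA : Dense (A.domain : Set H)) (g t : ℕ → H)
    (α : ℝ) (hα : 0 < α)
    (hframe : ∀ u : A.adjoint.domain, (Summable fun n => ‖⟪(u : H), g n⟫‖ ^ 2) ∧
      α * ‖A.adjoint u‖ ^ 2 ≤ ∑' n, ‖⟪(u : H), g n⟫‖ ^ 2)
    (γ : ℝ) (hγ : 0 < γ)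
    (hBessel : ∀ f : H, (Summable fun n => ‖⟪f, t n⟫‖ ^ 2) ∧
      ∑' n, ‖⟪f, t n⟫‖ ^ 2 ≤ γ * ‖f‖ ^ 2)
    (hdual : ∀ (h : A.domain) (u : A.adjoint.domain),
      ⟪(u : H), A h⟫ = ∑' n, ⟪t n, (h : H)⟫ * ⟪(u : H), g n⟫)
    (u : A.adjoint.domain) :
    Summable (fun n => ⟪g n, (u : H)⟫ • t n) ∧
      A.adjoint u = ∑' n, ⟪g n, (u : H)⟫ • t n := by
  classical
  set c : ℕ → ℂ := fun n => ⟪g n, (u : H)⟫ with hc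
  have hcsum : Summable fun n => ‖c n‖ ^ 2 := by
    have := (hframe u).1
    convert this using 2 with n
    rw [hc, ← norm_inner_symm]
  have hsum : Summable fun n => c n • t n := by
    rw [summable_iff_vanishing_norm]
    intro ε hε
    obtain ⟨s, hs⟩ := summable_iff_vanishing_norm.1 hcsum (ε ^ 2 / γ) (by positivity)
    refine ⟨s, fun s' hs' => ?_⟩
    have h1 : ‖∑ n ∈ s', c n • t n‖ ^ 2 ≤ γ * ∑ n ∈ s', ‖c n‖ ^ 2 :=
      bessel_finset_bound t γ hγ hBessel c s'
    have h2 : ∑ n ∈ s', ‖c n‖ ^ 2 < ε ^ 2 / γ := by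
      have := hs s' hs'
      calc ∑ n ∈ s', ‖c n‖ ^ 2 ≤ ‖∑ n ∈ s', ‖c n‖ ^ 2‖ := le_abs_self _
        _ < ε ^ 2 / γ := this
    have h3 : ‖∑ n ∈ s', c n • t n‖ ^ 2 < ε ^ 2 := by
      calc ‖∑ n ∈ s', c n • t n‖ ^ 2 ≤ γ * ∑ n ∈ s', ‖c n‖ ^ 2 := h1
        _ < γ * (ε ^ 2 / γ) := by exact (mul_lt_mul_iff_right₀ hγ).mpr h2
        _ = ε ^ 2 := by field_simp
    exact lt_of_pow_lt_pow_left₀ 2 hε.le h3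
  refine ⟨hsum, ?_⟩
  set v := ∑' n, c n • t n with hv
  refine LinearPMap.adjoint_apply_eq hA u (fun x => ?_)
  -- goal : ⟪v, x⟫ = ⟪(u : H), A x⟫
  have hxs : HasSum (fun n => ⟪(x : H), c n • t n⟫) ⟪(x : H), v⟫ :=
    hsum.hasSum.mapL (innerSL ℂ (x : H))
  have h1 : ⟪(x : H), v⟫ = ∑' n, c n * ⟪(x : H), t n⟫ := by
    rw [hxs.tsum_eq.symm]
    exact tsum_congr fun n => inner_smul_right _ _ _
  have h2 : ⟪v, (x : H)⟫ = ∑' n, ⟪t n, (x : H)⟫ * ⟪(u : H), g n⟫ := by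
    have hst : ⟪v, (x : H)⟫ = star ⟪(x : H), v⟫ := (inner_conj_symm v (x : H)).symm
    rw [hst, h1, tsum_star]
    refine tsum_congr fun n => ?_
    rw [star_mul]
    congr 1
    · exact inner_conj_symm _ _
    · exact inner_conj_symm _ _
  rw [h2, ← hdual x u]
end

section
/- Let A be a closed, densely defined, surjective operator on H with bounded pseudo-inverse A† ∈ B(H) satisfying A A† f = f for all f ∈ H. Let {gₙ} be a weak A-frame and {tₙ} a Bessel weak A-dual of {gₙ}. Then the sequence hₙ := (A†)* tₙ is Bessel and u = ∑ₙ ⟨u, gₙ⟩ hₙ for every u ∈ D(A*). -/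
open scoped ComplexInnerProductSpace

private lemma bessel_finsum_sq {H : Type*} [NormedAddCommGroup H] [InnerProductSpace ℂ H]
    (h : ℕ → H) (B : ℝ) (hB0 : 0 ≤ B)
    (hB : ∀ f : H, (Summable fun n => ‖⟪f, h n⟫‖ ^ 2) ∧ ∑' n, ‖⟪f, h n⟫‖ ^ 2 ≤ B * ‖f‖ ^ 2)
    (c : ℕ → ℂ) (s : Finset ℕ) :
    ‖∑ n ∈ s, c n • h n‖ ^ 2 ≤ B * ∑ n ∈ s, ‖c n‖ ^ 2 := by
  set x := ∑ n ∈ s, c n • h n with hx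
  have hCnn : 0 ≤ ∑ n ∈ s, ‖c n‖ ^ 2 := Finset.sum_nonneg fun n _ => sq_nonneg _
  have h1 : (‖x‖ : ℝ) ^ 2 ≤ ∑ n ∈ s, ‖c n‖ * ‖⟪x, h n⟫‖ := by
    have : (⟪x, x⟫ : ℂ) = ∑ n ∈ s, starRingEnd ℂ (c n) * ⟪h n, x⟫ := by
      rw [hx, sum_inner]
      exact Finset.sum_congr rfl fun n _ => inner_smul_left _ _ _
    calc ‖x‖ ^ 2 = ‖(⟪x, x⟫ : ℂ)‖ := by
            rw [@inner_self_eq_norm_sq_to_K ℂ]; simp [Complex.norm_real]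
      _ ≤ ∑ n ∈ s, ‖c n‖ * ‖⟪x, h n⟫‖ := by
            rw [this]
            refine (norm_sum_le _ _).trans (le_of_eq (Finset.sum_congr rfl fun n _ => ?_))
            rw [norm_mul, RCLike.norm_conj, norm_inner_symm]
  have h2 : (∑ n ∈ s, ‖c n‖ * ‖⟪x, h n⟫‖) ^ 2 ≤ (∑ n ∈ s, ‖c n‖ ^ 2) * (B * ‖x‖ ^ 2) := by
    refine (Finset.sum_mul_sq_le_sq_mul_sq s _ _).trans ?_
    refine mul_le_mul_of_nonneg_left ?_ hCnn
    exact (Summable.sum_le_tsum s (fun n _ => sq_nonneg _) (hB x).1).trans (hB x).2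
  -- so ‖x‖^4 ≤ (∑ c²) * B * ‖x‖², conclude
  have ha : (0:ℝ) ≤ ‖x‖ ^ 2 := sq_nonneg _
  have hC0 : 0 ≤ B * ∑ n ∈ s, ‖c n‖ ^ 2 := mul_nonneg hB0 hCnn
  have key : (‖x‖ ^ 2) ^ 2 ≤ (B * ∑ n ∈ s, ‖c n‖ ^ 2) * ‖x‖ ^ 2 := by
    calc (‖x‖ ^ 2) ^ 2 ≤ (∑ n ∈ s, ‖c n‖ * ‖⟪x, h n⟫‖) ^ 2 := by
          apply pow_le_pow_left₀ ha h1
      _ ≤ (∑ n ∈ s, ‖c n‖ ^ 2) * (B * ‖x‖ ^ 2) := h2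
      _ = (B * ∑ n ∈ s, ‖c n‖ ^ 2) * ‖x‖ ^ 2 := by ring
  nlinarith [key, ha, hC0]

private lemma bessel_summable {H : Type*} [NormedAddCommGroup H] [InnerProductSpace ℂ H]
    [CompleteSpace H]
    (h : ℕ → H) (B : ℝ) (hB0 : 0 ≤ B)
    (hB : ∀ f : H, (Summable fun n => ‖⟪f, h n⟫‖ ^ 2) ∧ ∑' n, ‖⟪f, h n⟫‖ ^ 2 ≤ B * ‖f‖ ^ 2)
    (c : ℕ → ℂ) (hc : Summable fun n => ‖c n‖ ^ 2) :
    Summable fun n => c n • h n := by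
  rw [summable_iff_vanishing_norm]
  intro ε hε
  obtain ⟨s, hs⟩ := summable_iff_vanishing_norm.1 hc (ε ^ 2 / (B + 1)) (by positivity)
  refine ⟨s, fun u hu => ?_⟩
  have h2 := hs u hu
  have hsum_nn : 0 ≤ ∑ n ∈ u, ‖c n‖ ^ 2 := Finset.sum_nonneg fun n _ => sq_nonneg _
  rw [Real.norm_of_nonneg hsum_nn] at h2
  have h1 := bessel_finsum_sq h B hB0 hB c u
  have : ‖∑ n ∈ u, c n • h n‖ ^ 2 < ε ^ 2 := by
    calc ‖∑ n ∈ u, c n • h n‖ ^ 2 ≤ B * ∑ n ∈ u, ‖c n‖ ^ 2 := h1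
      _ ≤ B * (ε ^ 2 / (B + 1)) := mul_le_mul_of_nonneg_left h2.le hB0
      _ < ε ^ 2 := by
          rw [mul_div_assoc']
          rw [div_lt_iff₀ (by linarith)]
          nlinarith [sq_nonneg ε, hε]
  exact lt_of_pow_lt_pow_left₀ 2 hε.le this

/-- Let `A` be a closed, densely defined, surjective operator on `H` with bounded
pseudo-inverse `A† ∈ B(H)` satisfying `A A† f = f` for all `f ∈ H`. Let `{gₙ}` be a weak
`A`-frame and `{tₙ}` a Bessel weak `A`-dual of `{gₙ}`. Then the sequence `hₙ := (A†)* tₙ`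
is Bessel and `u = ∑ₙ ⟨u, gₙ⟩ hₙ` for every `u ∈ D(A*)`. -/
theorem stmt_11 {H : Type*} [NormedAddCommGroup H] [InnerProductSpace ℂ H] [CompleteSpace H]
    (A : H →ₗ.[ℂ] H) (hAc : A.IsClosed) (hA : Dense (A.domain : Set H))
    (Adag : H →L[ℂ] H) (hAd : ∀ f : H, Adag f ∈ A.domain)
    (hinv : ∀ f : H, A ⟨Adag f, hAd f⟩ = f)
    (g t : ℕ → H)
    (α : ℝ) (hα : 0 < α)
    (hframe : ∀ u : A.adjoint.domain, (Summable fun n => ‖⟪(u : H), g n⟫‖ ^ 2) ∧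
      α * ‖A.adjoint u‖ ^ 2 ≤ ∑' n, ‖⟪(u : H), g n⟫‖ ^ 2)
    (γ : ℝ) (hγ : 0 < γ)
    (hBessel : ∀ f : H, (Summable fun n => ‖⟪f, t n⟫‖ ^ 2) ∧
      ∑' n, ‖⟪f, t n⟫‖ ^ 2 ≤ γ * ‖f‖ ^ 2)
    (hdual : ∀ (h : A.domain) (u : A.adjoint.domain),
      ⟪(u : H), A h⟫ = ∑' n, ⟪t n, (h : H)⟫ * ⟪(u : H), g n⟫) :
    (∃ γ' : ℝ, 0 < γ' ∧ ∀ f : H,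
      (Summable fun n => ‖⟪f, ContinuousLinearMap.adjoint Adag (t n)⟫‖ ^ 2) ∧
      ∑' n, ‖⟪f, ContinuousLinearMap.adjoint Adag (t n)⟫‖ ^ 2 ≤ γ' * ‖f‖ ^ 2) ∧
    ∀ u : A.adjoint.domain,
      HasSum (fun n => ⟪g n, (u : H)⟫ • ContinuousLinearMap.adjoint Adag (t n)) (u : H) := by
  set h : ℕ → H := fun n => ContinuousLinearMap.adjoint Adag (t n) with hh
  have hkey : ∀ (f : H) (n : ℕ), (⟪f, h n⟫ : ℂ) = ⟪Adag f, t n⟫ := fun f n =>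
    ContinuousLinearMap.adjoint_inner_right Adag f (t n)
  set γ' : ℝ := γ * (‖Adag‖ ^ 2 + 1) with hγ'
  have hγ'0 : 0 < γ' := by positivity
  have hBes : ∀ f : H, (Summable fun n => ‖⟪f, h n⟫‖ ^ 2) ∧
      ∑' n, ‖⟪f, h n⟫‖ ^ 2 ≤ γ' * ‖f‖ ^ 2 := by
    intro f
    have hs : (Summable fun n => ‖⟪f, h n⟫‖ ^ 2) := by
      simp_rw [hkey f]; exact (hBessel (Adag f)).1
    refine ⟨hs, ?_⟩
    have h1 : ∑' n, ‖⟪f, h n⟫‖ ^ 2 ≤ γ * ‖Adag f‖ ^ 2 := by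
      simp_rw [hkey f]; exact (hBessel (Adag f)).2
    have h2 : ‖Adag f‖ ^ 2 ≤ ‖Adag‖ ^ 2 * ‖f‖ ^ 2 := by
      rw [← mul_pow]
      exact pow_le_pow_left₀ (norm_nonneg _) (Adag.le_opNorm f) 2
    calc ∑' n, ‖⟪f, h n⟫‖ ^ 2 ≤ γ * (‖Adag‖ ^ 2 * ‖f‖ ^ 2) :=
          h1.trans (mul_le_mul_of_nonneg_left h2 hγ.le)
      _ ≤ γ' * ‖f‖ ^ 2 := by rw [hγ']; nlinarith [sq_nonneg ‖f‖, sq_nonneg ‖Adag‖]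
  refine ⟨⟨γ', hγ'0, hBes⟩, fun u => ?_⟩
  set c : ℕ → ℂ := fun n => ⟪g n, (u : H)⟫ with hc
  have hcs : Summable fun n => ‖c n‖ ^ 2 := by
    simp_rw [hc, norm_inner_symm]; exact (hframe u).1
  have hsum : Summable fun n => c n • h n := bessel_summable h γ' hγ'0.le hBes c hcs
  have htsum : (∑' n, c n • h n) = (u : H) := by
    apply ext_inner_left ℂ
    intro v
    have hmap : HasSum (fun n => (⟪v, c n • h n⟫ : ℂ)) ⟪v, ∑' n, c n • h n⟫ :=
      (innerSL ℂ v).hasSum hsum.hasSum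
    rw [hmap.tsum_eq.symm]
    have hd := hdual ⟨Adag v, hAd v⟩ u
    rw [hinv v] at hd
    have hconj : (⟪v, (u : H)⟫ : ℂ) = ∑' n, ⟪Adag v, t n⟫ * ⟪g n, (u : H)⟫ := by
      have := congrArg (starRingEnd ℂ) hd
      rw [inner_conj_symm] at this
      rw [this]
      simp only [starRingEnd_apply]
      rw [tsum_star]
      congr 1
      funext n
      simp [star_mul', inner_conj_symm, mul_comm]
    rw [hconj]
    congr 1
    funext n
    rw [inner_smul_right, hkey v n, hc, mul_comm]
  have hfinal := hsum.hasSum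
  rwa [htsum] at hfinal
end

section
/- Let J, H be Hilbert spaces, K ∈ B(J, H), and {gₙ} an atomic system for K. Then there exist α, β > 0 such that α‖K* f‖² ≤ ∑ₙ |⟨f, gₙ⟩|² ≤ β‖f‖² for all f ∈ H. -/
open scoped ComplexInnerProductSpace InnerProductSpace

/-!
Put `y = K* f` and expand `K y = ∑ aₙ gₙ` with `‖a‖₂ ≤ γ‖y‖`. Then
`‖y‖² = |⟨f, K y⟩| ≤ ∑ |aₙ| |⟨f, gₙ⟩| ≤ ‖a‖₂ (∑ |⟨f, gₙ⟩|²)^{1/2} ≤ γ ‖y‖ (∑ |⟨f, gₙ⟩|²)^{1/2}`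
by Cauchy–Schwarz in `ℓ²`; cancelling `‖y‖` gives the lower bound with `α = γ⁻²`.
The upper bound is the Bessel bound.
-/

theorem summable_mul_and_tsum_mul_le_sqrt_mul_sqrt {ι : Type*} {f g : ι → ℝ}
    (hf : ∀ i, 0 ≤ f i) (hg : ∀ i, 0 ≤ g i)
    (hf_sum : Summable fun i => f i ^ 2) (hg_sum : Summable fun i => g i ^ 2) :
    (Summable fun i => f i * g i) ∧
      ∑' i, f i * g i ≤ √(∑' i, f i ^ 2) * √(∑' i, g i ^ 2) := by
  simp_rw [← Real.rpow_two] at hf_sum hg_sum ⊢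
  simpa only [Real.sqrt_eq_rpow] using
    Real.summable_and_inner_le_Lp_mul_Lq_tsum_of_nonneg .two_two hf hg hf_sum hg_sum

section

variable {𝕜 ι : Type*} [RCLike 𝕜]

theorem norm_inner_le_of_hasSum_smul {E : Type*} [NormedAddCommGroup E] [InnerProductSpace 𝕜 E]
    {a : ι → 𝕜} {g : ι → E} {v : E} (hv : HasSum (fun n => a n • g n) v) (x : E)
    (ha : Summable fun n => ‖a n‖ ^ 2) (hx : Summable fun n => ‖⟪x, g n⟫_𝕜‖ ^ 2) :
    ‖⟪x, v⟫_𝕜‖ ≤ √(∑' n, ‖a n‖ ^ 2) * √(∑' n, ‖⟪x, g n⟫_𝕜‖ ^ 2) := by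
  have hnorm_term : ∀ n, ‖⟪x, a n • g n⟫_𝕜‖ = ‖a n‖ * ‖⟪x, g n⟫_𝕜‖ := fun n => by
    rw [inner_smul_right, norm_mul]
  obtain ⟨hsum, hle⟩ := summable_mul_and_tsum_mul_le_sqrt_mul_sqrt
    (fun n => norm_nonneg (a n)) (fun n => norm_nonneg ⟪x, g n⟫_𝕜) ha hx
  have hinner : HasSum (fun n => ⟪x, a n • g n⟫_𝕜) ⟪x, v⟫_𝕜 := hv.mapL (innerSL 𝕜 x)
  rw [← hinner.tsum_eq]
  calc ‖∑' n, ⟪x, a n • g n⟫_𝕜‖ ≤ ∑' n, ‖⟪x, a n • g n⟫_𝕜‖ :=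
        norm_tsum_le_tsum_norm (by simpa only [hnorm_term] using hsum)
    _ = ∑' n, ‖a n‖ * ‖⟪x, g n⟫_𝕜‖ := tsum_congr hnorm_term
    _ ≤ _ := hle

variable {J H : Type*} [NormedAddCommGroup J] [InnerProductSpace 𝕜 J]
  [NormedAddCommGroup H] [InnerProductSpace 𝕜 H]

/-- Condition (ii) of an atomic system for `K`, with constant `γ`. -/
def HasAtomicDecomposition (K : J →L[𝕜] H) (g : ι → H) (γ : ℝ) : Prop :=
  ∀ y : J, ∃ a : ι → 𝕜, Summable (fun n => ‖a n‖ ^ 2) ∧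
    √(∑' n, ‖a n‖ ^ 2) ≤ γ * ‖y‖ ∧ HasSum (fun n => a n • g n) (K y)

variable [CompleteSpace J] [CompleteSpace H]

theorem HasAtomicDecomposition.sq_norm_adjoint_le {K : J →L[𝕜] H} {g : ι → H} {γ : ℝ}
    (hK : HasAtomicDecomposition K g γ) (x : H) (hx : Summable fun n => ‖⟪x, g n⟫_𝕜‖ ^ 2) :
    ‖ContinuousLinearMap.adjoint K x‖ ^ 2 ≤ γ ^ 2 * ∑' n, ‖⟪x, g n⟫_𝕜‖ ^ 2 := by
  set y := ContinuousLinearMap.adjoint K x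
  set S := ∑' n, ‖⟪x, g n⟫_𝕜‖ ^ 2
  obtain ⟨a, ha, haγ, hKy⟩ := hK y
  have hy : ‖y‖ ^ 2 ≤ γ * ‖y‖ * √S :=
    calc ‖y‖ ^ 2 = ‖⟪y, y⟫_𝕜‖ := by
          rw [← inner_self_eq_norm_sq (𝕜 := 𝕜), inner_self_re_eq_norm]
      _ = ‖⟪x, K y⟫_𝕜‖ := by rw [ContinuousLinearMap.adjoint_inner_left]
      _ ≤ √(∑' n, ‖a n‖ ^ 2) * √S := norm_inner_le_of_hasSum_smul hKy x ha hx
      _ ≤ γ * ‖y‖ * √S := by gcongr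
  have hS : 0 ≤ S := tsum_nonneg fun n => by positivity
  rcases (norm_nonneg y).eq_or_lt with hy0 | hy0
  · rw [← hy0, zero_pow two_ne_zero]
    exact mul_nonneg (sq_nonneg γ) hS
  · have hbound : ‖y‖ ≤ γ * √S := by
      rw [pow_two, mul_right_comm] at hy
      exact le_of_mul_le_mul_right hy hy0
    calc ‖y‖ ^ 2 ≤ (γ * √S) ^ 2 := by gcongr
      _ = γ ^ 2 * S := by rw [mul_pow, Real.sq_sqrt hS]

end

/-- Let `J, H` be Hilbert spaces, `K ∈ B(J, H)`, and `{gₙ}` an atomic system for `K`. Then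
there exist `α, β > 0` such that `α‖K* f‖² ≤ ∑ₙ |⟨f, gₙ⟩|² ≤ β‖f‖²` for all `f ∈ H`. -/
theorem stmt_13 {J H : Type*}
    [NormedAddCommGroup J] [InnerProductSpace ℂ J] [CompleteSpace J]
    [NormedAddCommGroup H] [InnerProductSpace ℂ H] [CompleteSpace H]
    (K : J →L[ℂ] H) (g : ℕ → H)
    (c : ℝ) (hc : 0 < c)
    (hBessel : ∀ x : H, (Summable fun n => ‖⟪x, g n⟫‖ ^ 2) ∧
      ∑' n, ‖⟪x, g n⟫‖ ^ 2 ≤ c * ‖x‖ ^ 2)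
    (γ : ℝ) (hγ : 0 < γ)
    (hatom : ∀ x : J, ∃ a : ℕ → ℂ, Summable (fun n => ‖a n‖ ^ 2) ∧
      Real.sqrt (∑' n, ‖a n‖ ^ 2) ≤ γ * ‖x‖ ∧ HasSum (fun n => a n • g n) (K x)) :
    ∃ α β : ℝ, 0 < α ∧ 0 < β ∧ ∀ x : H,
      α * ‖ContinuousLinearMap.adjoint K x‖ ^ 2 ≤ ∑' n, ‖⟪x, g n⟫‖ ^ 2 ∧
      ∑' n, ‖⟪x, g n⟫‖ ^ 2 ≤ β * ‖x‖ ^ 2 := by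
  have hK : HasAtomicDecomposition K g γ := hatom
  refine ⟨(γ ^ 2)⁻¹, c, by positivity, hc, fun x => ⟨?_, (hBessel x).2⟩⟩
  rw [inv_mul_le_iff₀ (by positivity)]
  exact hK.sq_norm_adjoint_le x (hBessel x).1
end

section
/- Let J, H be Hilbert spaces, K ∈ B(J,H), {gₙ} a Bessel sequence in H, and {kₙ} a Bessel sequence in J such that Kf = ∑ₙ ⟨f, kₙ⟩_J gₙ for all f ∈ J. Then {gₙ} is a K-frame: there exist α, β > 0 with α‖K* f‖_J² ≤ ∑ₙ |⟨f, gₙ⟩_H|² ≤ β‖f‖_H² for all f ∈ H. -/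
/-!
With `u = K* f`, the representation of `K u` gives `‖u‖² = ⟪f, K u⟫ = ∑ₙ ⟨u, kₙ⟩ ⟨f, gₙ⟩`, so by
Cauchy–Schwarz and the Bessel bound for `{kₙ}`,
`‖u‖⁴ ≤ (∑ₙ |⟨u, kₙ⟩|²) (∑ₙ |⟨f, gₙ⟩|²) ≤ c_k ‖u‖² ∑ₙ |⟨f, gₙ⟩|²`.
Hence `α = 1 / c_k` works; the upper bound is the Bessel bound for `{gₙ}`.
-/

open scoped InnerProductSpace

theorem summable_mul_and_tsum_mul_sq_le {ι : Type*} {a b : ι → ℝ} (ha : ∀ i, 0 ≤ a i)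
    (hb : ∀ i, 0 ≤ b i) (ha2 : Summable fun i => a i ^ 2) (hb2 : Summable fun i => b i ^ 2) :
    (Summable fun i => a i * b i) ∧
      (∑' i, a i * b i) ^ 2 ≤ (∑' i, a i ^ 2) * ∑' i, b i ^ 2 := by
  have holder := Real.summable_and_inner_le_Lp_mul_Lq_tsum_of_nonneg Real.HolderConjugate.two_two
    ha hb (by simpa only [Real.rpow_two] using ha2) (by simpa only [Real.rpow_two] using hb2)
  simp only [Real.rpow_two, ← Real.sqrt_eq_rpow] at holder
  refine ⟨holder.1, ?_⟩
  have h0 : 0 ≤ ∑' i, a i * b i := tsum_nonneg fun i => mul_nonneg (ha i) (hb i)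
  calc (∑' i, a i * b i) ^ 2 ≤ (√(∑' i, a i ^ 2) * √(∑' i, b i ^ 2)) ^ 2 := by
        gcongr; exact holder.2
    _ = _ := by
      rw [mul_pow, Real.sq_sqrt (tsum_nonneg fun i => sq_nonneg _),
        Real.sq_sqrt (tsum_nonneg fun i => sq_nonneg _)]

section
variable {𝕜 E F : Type*} [RCLike 𝕜]
  [NormedAddCommGroup E] [InnerProductSpace 𝕜 E] [NormedAddCommGroup F] [InnerProductSpace 𝕜 F]

theorem norm_inner_sq_le_of_hasSum_smul {ι : Type*} {c : ι → 𝕜} {g : ι → F} {v : F}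
    (hv : HasSum (fun n => c n • g n) v) (hc : Summable fun n => ‖c n‖ ^ 2) (f : F)
    (hg : Summable fun n => ‖⟪f, g n⟫_𝕜‖ ^ 2) :
    ‖⟪f, v⟫_𝕜‖ ^ 2 ≤ (∑' n, ‖c n‖ ^ 2) * ∑' n, ‖⟪f, g n⟫_𝕜‖ ^ 2 := by
  have hsum : HasSum (fun n => c n * ⟪f, g n⟫_𝕜) ⟪f, v⟫_𝕜 := by
    simpa only [innerSL_apply_apply, inner_smul_right] using hv.mapL (innerSL 𝕜 f)
  obtain ⟨hprod, hcs⟩ :=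
    summable_mul_and_tsum_mul_sq_le (fun n => norm_nonneg (c n)) (fun n => norm_nonneg _) hc hg
  calc ‖⟪f, v⟫_𝕜‖ ^ 2 ≤ (∑' n, ‖c n‖ * ‖⟪f, g n⟫_𝕜‖) ^ 2 := by
        rw [← hsum.tsum_eq]
        gcongr
        simpa only [norm_mul] using norm_tsum_le_tsum_norm (hprod.congr fun n => (norm_mul _ _).symm)
    _ ≤ _ := hcs

theorem norm_adjoint_apply_sq_le [CompleteSpace E] [CompleteSpace F] {ι : Type*}
    (K : E →L[𝕜] F) {g : ι → F} {k : ι → E}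
    (hrep : ∀ u, HasSum (fun n => ⟪k n, u⟫_𝕜 • g n) (K u)) {ck : ℝ} (hck : 0 ≤ ck)
    (hk : ∀ u, (Summable fun n => ‖⟪u, k n⟫_𝕜‖ ^ 2) ∧ ∑' n, ‖⟪u, k n⟫_𝕜‖ ^ 2 ≤ ck * ‖u‖ ^ 2)
    (f : F) (hg : Summable fun n => ‖⟪f, g n⟫_𝕜‖ ^ 2) :
    ‖K.adjoint f‖ ^ 2 ≤ ck * ∑' n, ‖⟪f, g n⟫_𝕜‖ ^ 2 := by
  set u := K.adjoint f
  have hu : ‖u‖ ^ 2 = ‖⟪f, K u⟫_𝕜‖ := by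
    rw [← K.adjoint_inner_left, inner_self_eq_norm_sq_to_K, norm_pow, RCLike.norm_ofReal, abs_norm]
  have hku : ∀ n, ‖⟪k n, u⟫_𝕜‖ = ‖⟪u, k n⟫_𝕜‖ := fun n => norm_inner_symm _ _
  have hcs := norm_inner_sq_le_of_hasSum_smul (hrep u) ((hk u).1.congr fun n => by rw [hku]) f hg
  simp only [hku, ← hu] at hcs
  have hS : 0 ≤ ∑' n, ‖⟪f, g n⟫_𝕜‖ ^ 2 := tsum_nonneg fun n => sq_nonneg _
  have hquartic : ‖u‖ ^ 2 * ‖u‖ ^ 2 ≤ ‖u‖ ^ 2 * (ck * ∑' n, ‖⟪f, g n⟫_𝕜‖ ^ 2) := by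
    nlinarith [(hk u).2]
  rcases (sq_nonneg ‖u‖).eq_or_lt with h0 | hpos
  · rw [← h0]
    exact mul_nonneg hck hS
  · exact le_of_mul_le_mul_left hquartic hpos

end

open scoped ComplexInnerProductSpace

-- The paper's `⟨f, kₙ⟩`, linear in `f`, is `⟪kₙ, f⟫` here.
/-- Let `J, H` be Hilbert spaces, `K ∈ B(J,H)`, `{gₙ}` a Bessel sequence in `H`, and `{kₙ}`
a Bessel sequence in `J` such that `Kf = ∑ₙ ⟨f, kₙ⟩_J gₙ` for all `f ∈ J`. Then `{gₙ}` is a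
`K`-frame: there exist `α, β > 0` with `α‖K* f‖_J² ≤ ∑ₙ |⟨f, gₙ⟩_H|² ≤ β‖f‖_H²` for all
`f ∈ H`. (The paper's `⟨f, kₙ⟩`, linear in `f`, is `⟪kₙ, f⟫` in Mathlib.) -/
theorem stmt_14 {J H : Type*}
    [NormedAddCommGroup J] [InnerProductSpace ℂ J] [CompleteSpace J]
    [NormedAddCommGroup H] [InnerProductSpace ℂ H] [CompleteSpace H]
    (K : J →L[ℂ] H) (g : ℕ → H) (k : ℕ → J)
    (cg : ℝ) (hcg : 0 < cg)
    (hBesselg : ∀ x : H, (Summable fun n => ‖⟪x, g n⟫‖ ^ 2) ∧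
      ∑' n, ‖⟪x, g n⟫‖ ^ 2 ≤ cg * ‖x‖ ^ 2)
    (ck : ℝ) (hck : 0 < ck)
    (hBesselk : ∀ x : J, (Summable fun n => ‖⟪x, k n⟫‖ ^ 2) ∧
      ∑' n, ‖⟪x, k n⟫‖ ^ 2 ≤ ck * ‖x‖ ^ 2)
    (hrep : ∀ f : J, HasSum (fun n => ⟪k n, f⟫ • g n) (K f)) :
    ∃ α β : ℝ, 0 < α ∧ 0 < β ∧ ∀ f : H,
      α * ‖ContinuousLinearMap.adjoint K f‖ ^ 2 ≤ ∑' n, ‖⟪f, g n⟫‖ ^ 2 ∧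
      ∑' n, ‖⟪f, g n⟫‖ ^ 2 ≤ β * ‖f‖ ^ 2 := by
  refine ⟨ck⁻¹, cg, inv_pos.2 hck, hcg, fun f => ⟨?_, (hBesselg f).2⟩⟩
  rw [inv_mul_le_iff₀ hck]
  exact norm_adjoint_apply_sq_le K hrep hck.le hBesselk f (hBesselg f).1
end

section
/- Let J, H be Hilbert spaces, {gₙ} ⊂ H with bounded synthesis operator D ∈ B(ℓ², H), and K ∈ B(J, H) with R(K) ⊆ R(D). Then {gₙ} is a K-frame: there exist α, β > 0 with α‖K* f‖_J² ≤ ∑ₙ |⟨f, gₙ⟩|² ≤ β‖f‖² for all f ∈ H. -/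
open scoped InnerProductSpace ComplexInnerProductSpace

/-!
Douglas' lemma: restricted to `(ker D)ᗮ` the operator `D` is injective with the same range, so
`K = D L` for a linear `L`, which is bounded by the closed graph theorem. Hence `K* = L* D*` and
`‖K* f‖ ≤ ‖L*‖ ‖D* f‖`. Since `(D* f)ₙ = ⟪gₙ, f⟫`, the sum `∑ₙ |⟪f, gₙ⟫|²` is `‖D* f‖²`, which gives
both frame bounds.
-/

universe u v w x

section Factorization

variable {𝕜 : Type u} {E : Type v} {F : Type w} {J : Type x} [NontriviallyNormedField 𝕜]
  [NormedAddCommGroup E] [NormedSpace 𝕜 E] [CompleteSpace E]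
  [NormedAddCommGroup F] [NormedSpace 𝕜 F]
  [NormedAddCommGroup J] [NormedSpace 𝕜 J] [CompleteSpace J]

theorem ContinuousLinearMap.exists_comp_eq_of_injective_of_range_subset
    (D : E →L[𝕜] F) (hD : Function.Injective D) (K : J →L[𝕜] F)
    (hrange : Set.range K ⊆ Set.range D) : ∃ L : J →L[𝕜] E, D ∘L L = K := by
  let Dinv := LinearEquiv.ofInjective (D : E →ₗ[𝕜] F) hD
  let L : J →ₗ[𝕜] E :=
    Dinv.symm.toLinearMap ∘ₗ (K : J →ₗ[𝕜] F).codRestrict _ fun x => hrange ⟨x, rfl⟩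
  have hDL : ∀ x, D (L x) = K x := fun x =>
    congrArg Subtype.val (Dinv.apply_symm_apply ⟨K x, hrange ⟨x, rfl⟩⟩)
  have hL : Continuous L := by
    refine L.continuous_of_seq_closed_graph fun u x y hux huy => hD ?_
    rw [hDL]
    refine tendsto_nhds_unique ?_ ((K.continuous.tendsto x).comp hux)
    simpa only [Function.comp_def, hDL] using (D.continuous.tendsto y).comp huy
  exact ⟨⟨L, hL⟩, ContinuousLinearMap.ext hDL⟩

end Factorization

section Douglas

variable {𝕜 : Type u} {E : Type v} {H : Type w} {J : Type x} [RCLike 𝕜]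
  [NormedAddCommGroup E] [InnerProductSpace 𝕜 E] [CompleteSpace E]
  [NormedAddCommGroup H] [InnerProductSpace 𝕜 H]
  [NormedAddCommGroup J] [InnerProductSpace 𝕜 J] [CompleteSpace J]

theorem ContinuousLinearMap.exists_comp_eq_of_range_subset
    (D : E →L[𝕜] H) (K : J →L[𝕜] H) (hrange : Set.range K ⊆ Set.range D) :
    ∃ L : J →L[𝕜] E, D ∘L L = K := by
  set N := LinearMap.ker (D : E →ₗ[𝕜] H)
  have : CompleteSpace N := D.isClosed_ker.completeSpace_coe
  let D' : Nᗮ →L[𝕜] H := D ∘L Nᗮ.subtypeL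
  have hD' : Function.Injective D' := by
    refine (injective_iff_map_eq_zero D').mpr fun c hc => ?_
    exact Subtype.ext ((Submodule.orthogonal_disjoint N).le_bot ⟨hc, c.2⟩)
  have hrange' : Set.range D ⊆ Set.range D' := by
    rintro _ ⟨c, rfl⟩
    have hker : c - Nᗮ.starProjection c ∈ N := by
      simpa only [Submodule.orthogonal_orthogonal] using
        Nᗮ.sub_starProjection_mem_orthogonal c
    rw [LinearMap.mem_ker, ContinuousLinearMap.coe_coe, map_sub, sub_eq_zero] at hker
    exact ⟨Nᗮ.orthogonalProjectionOnto c, hker.symm⟩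
  obtain ⟨L, hL⟩ :=
    D'.exists_comp_eq_of_injective_of_range_subset hD' K (hrange.trans hrange')
  exact ⟨Nᗮ.subtypeL ∘L L, hL⟩

variable [CompleteSpace H]

theorem ContinuousLinearMap.exists_norm_adjoint_le_of_range_subset
    (D : E →L[𝕜] H) (K : J →L[𝕜] H) (hrange : Set.range K ⊆ Set.range D) :
    ∃ C : ℝ, 0 < C ∧ ∀ f, ‖K.adjoint f‖ ≤ C * ‖D.adjoint f‖ := by
  obtain ⟨L, rfl⟩ := D.exists_comp_eq_of_range_subset K hrange
  refine ⟨‖L.adjoint‖ + 1, by positivity, fun f => ?_⟩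
  rw [ContinuousLinearMap.adjoint_comp, ContinuousLinearMap.comp_apply]
  calc ‖L.adjoint (D.adjoint f)‖ ≤ ‖L.adjoint‖ * ‖D.adjoint f‖ := L.adjoint.le_opNorm _
    _ ≤ (‖L.adjoint‖ + 1) * ‖D.adjoint f‖ := by gcongr; linarith

end Douglas

section Synthesis

variable {𝕜 : Type u} {ι : Type v} {H : Type w} [RCLike 𝕜]
  [NormedAddCommGroup H] [InnerProductSpace 𝕜 H]

def IsSynthesisOperator (g : ι → H) (D : lp (fun _ : ι => 𝕜) 2 →L[𝕜] H) : Prop :=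
  ∀ c : lp (fun _ : ι => 𝕜) 2, HasSum (fun n => c n • g n) (D c)

namespace IsSynthesisOperator

variable {g : ι → H} {D : lp (fun _ : ι => 𝕜) 2 →L[𝕜] H}

theorem apply_single [DecidableEq ι] (hD : IsSynthesisOperator g D) (n : ι) :
    D (lp.single 2 n 1) = g n := by
  have hsingle := hasSum_single (f := fun m => (lp.single 2 n (1 : 𝕜) : ι → 𝕜) m • g m) n
    fun m hm => by rw [lp.single_apply_ne _ _ _ hm, zero_smul]
  simpa only [lp.single_apply_self, one_smul] using (hD _).unique hsingle

variable [CompleteSpace H]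

theorem adjoint_apply (hD : IsSynthesisOperator g D) (f : H) (n : ι) :
    D.adjoint f n = ⟪g n, f⟫_𝕜 := by
  classical
  rw [← hD.apply_single n, ← ContinuousLinearMap.adjoint_inner_right, lp.inner_single_left,
    RCLike.inner_apply, map_one, mul_one]

theorem hasSum_norm_inner_sq (hD : IsSynthesisOperator g D) (f : H) :
    HasSum (fun n => ‖⟪f, g n⟫_𝕜‖ ^ 2) (‖D.adjoint f‖ ^ 2) := by
  simpa [hD.adjoint_apply, norm_inner_symm] using lp.hasSum_norm (p := 2) (by norm_num) (D.adjoint f)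

end IsSynthesisOperator

end Synthesis

/-- Let `J, H` be Hilbert spaces, `{gₙ} ⊂ H` with bounded synthesis operator
`D ∈ B(ℓ², H)`, and `K ∈ B(J, H)` with `R(K) ⊆ R(D)`. Then `{gₙ}` is a `K`-frame: there
exist `α, β > 0` with `α‖K* f‖_J² ≤ ∑ₙ |⟨f, gₙ⟩|² ≤ β‖f‖²` for all `f ∈ H`. -/
theorem stmt_16 {J H : Type*}
    [NormedAddCommGroup J] [InnerProductSpace ℂ J] [CompleteSpace J]
    [NormedAddCommGroup H] [InnerProductSpace ℂ H] [CompleteSpace H]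
    (g : ℕ → H) (D : lp (fun _ : ℕ => ℂ) 2 →L[ℂ] H)
    (hD : ∀ c : lp (fun _ : ℕ => ℂ) 2, HasSum (fun n => c n • g n) (D c))
    (K : J →L[ℂ] H) (hrange : Set.range K ⊆ Set.range D) :
    ∃ α β : ℝ, 0 < α ∧ 0 < β ∧ ∀ f : H,
      (Summable fun n => ‖⟪f, g n⟫‖ ^ 2) ∧
      α * ‖ContinuousLinearMap.adjoint K f‖ ^ 2 ≤ ∑' n, ‖⟪f, g n⟫‖ ^ 2 ∧
      ∑' n, ‖⟪f, g n⟫‖ ^ 2 ≤ β * ‖f‖ ^ 2 := by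
  obtain ⟨C, hC, hKD⟩ := D.exists_norm_adjoint_le_of_range_subset K hrange
  refine ⟨(C ^ 2)⁻¹, ‖D‖ ^ 2 + 1, by positivity, by positivity, fun f => ?_⟩
  have hsum := IsSynthesisOperator.hasSum_norm_inner_sq hD f
  refine ⟨hsum.summable, ?_, ?_⟩ <;> rw [hsum.tsum_eq]
  · rw [inv_mul_le_iff₀ (by positivity), ← mul_pow]
    exact pow_le_pow_left₀ (norm_nonneg _) (hKD f) 2
  · have hDf : ‖D.adjoint f‖ ≤ ‖D‖ * ‖f‖ := by
      simpa only [LinearIsometryEquiv.norm_map] using D.adjoint.le_opNorm f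
    calc ‖D.adjoint f‖ ^ 2 ≤ (‖D‖ * ‖f‖) ^ 2 := pow_le_pow_left₀ (norm_nonneg _) hDf 2
      _ ≤ (‖D‖ ^ 2 + 1) * ‖f‖ ^ 2 := by rw [mul_pow]; gcongr; linarith
end

section
/- Let J be a separable Hilbert space, K ∈ B(J, H), and {fₙ} a frame for J with dual frame {hₙ}. Then {K fₙ} is an atomic system for K: it is a Bessel sequence in H and Kf = ∑ₙ ⟨f, hₙ⟩_J K fₙ for all f ∈ J, with coefficient sequences {⟨f, hₙ⟩_J} satisfying ‖{⟨f, hₙ⟩_J}‖_{ℓ²} ≤ γ‖f‖_J for some γ > 0. -/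
open scoped ComplexInnerProductSpace

/-- Let `J` be a separable Hilbert space, `K ∈ B(J, H)`, and `{fₙ}` a frame for `J` with
dual frame `{hₙ}`. Then `{K fₙ}` is an atomic system for `K`: it is a Bessel sequence in
`H` and `Kf = ∑ₙ ⟨f, hₙ⟩_J K fₙ` for all `f ∈ J`, with coefficient sequences
`{⟨f, hₙ⟩_J}` satisfying `‖{⟨f, hₙ⟩_J}‖_{ℓ²} ≤ γ‖f‖_J` for some `γ > 0`. -/
theorem stmt_17 {J H : Type*}
    [NormedAddCommGroup J] [InnerProductSpace ℂ J] [CompleteSpace J]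
    [TopologicalSpace.SeparableSpace J]
    [NormedAddCommGroup H] [InnerProductSpace ℂ H] [CompleteSpace H]
    (K : J →L[ℂ] H) (f h : ℕ → J)
    (α β : ℝ) (hα : 0 < α) (hβ : 0 < β)
    (hframe : ∀ x : J, (Summable fun n => ‖⟪x, f n⟫‖ ^ 2) ∧
      α * ‖x‖ ^ 2 ≤ ∑' n, ‖⟪x, f n⟫‖ ^ 2 ∧ ∑' n, ‖⟪x, f n⟫‖ ^ 2 ≤ β * ‖x‖ ^ 2)
    (α' β' : ℝ) (hα' : 0 < α') (hβ' : 0 < β')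
    (hframe' : ∀ x : J, (Summable fun n => ‖⟪x, h n⟫‖ ^ 2) ∧
      α' * ‖x‖ ^ 2 ≤ ∑' n, ‖⟪x, h n⟫‖ ^ 2 ∧ ∑' n, ‖⟪x, h n⟫‖ ^ 2 ≤ β' * ‖x‖ ^ 2)
    (hdual : ∀ x : J, HasSum (fun n => ⟪h n, x⟫ • f n) x) :
    (∃ c : ℝ, 0 < c ∧ ∀ y : H, (Summable fun n => ‖⟪y, K (f n)⟫‖ ^ 2) ∧
      ∑' n, ‖⟪y, K (f n)⟫‖ ^ 2 ≤ c * ‖y‖ ^ 2) ∧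
    (∀ x : J, HasSum (fun n => ⟪h n, x⟫ • K (f n)) (K x)) ∧
    ∃ γ : ℝ, 0 < γ ∧ ∀ x : J,
      Real.sqrt (∑' n, ‖⟪x, h n⟫‖ ^ 2) ≤ γ * ‖x‖ := by
  refine ⟨⟨β * ‖K‖ ^ 2 + 1, by positivity, fun y => ?_⟩, fun x => ?_, ⟨Real.sqrt β', Real.sqrt_pos.mpr hβ', fun x => ?_⟩⟩
  · have key : ∀ n, ⟪y, K (f n)⟫ = ⟪(ContinuousLinearMap.adjoint K) y, f n⟫ := fun n =>
      (ContinuousLinearMap.adjoint_inner_left K (f n) y).symm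
    obtain ⟨hs, _, hub⟩ := hframe ((ContinuousLinearMap.adjoint K) y)
    simp only [key]
    refine ⟨hs, hub.trans ?_⟩
    have h1 : ‖(ContinuousLinearMap.adjoint K) y‖ ≤ ‖K‖ * ‖y‖ := by
      calc ‖(ContinuousLinearMap.adjoint K) y‖ ≤ ‖ContinuousLinearMap.adjoint K‖ * ‖y‖ :=
            (ContinuousLinearMap.adjoint K).le_opNorm y
        _ = ‖K‖ * ‖y‖ := by rw [LinearIsometryEquiv.norm_map ContinuousLinearMap.adjoint K]
    have h2 : ‖(ContinuousLinearMap.adjoint K) y‖ ^ 2 ≤ (‖K‖ * ‖y‖) ^ 2 := by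
      apply pow_le_pow_left₀ (norm_nonneg _) h1
    nlinarith [norm_nonneg y, hβ.le, sq_nonneg ‖y‖]
  · have := (hdual x).mapL K
    simpa using this
  · obtain ⟨hs, _, hub⟩ := hframe' x
    calc Real.sqrt (∑' n, ‖⟪x, h n⟫‖ ^ 2) ≤ Real.sqrt (β' * ‖x‖ ^ 2) :=
          Real.sqrt_le_sqrt hub
      _ = Real.sqrt β' * ‖x‖ := by
          rw [Real.sqrt_mul hβ'.le, Real.sqrt_sq (norm_nonneg x)]
end
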